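/- Let P, Q be adjacent rank-n projections on H (n ≥ 2, dim H ≥ 2n+1), put in the normal form P = diag(I_{n−1}, [[1,0],[0,0]], 0) and Q = diag(I_{n−1}, [[d,√(d(1−d))],[√(d(1−d)),1−d]], 0) with 0 ≤ d < 1, relative to H = H₁ ⊕ H₂ ⊕ H₃ with dim H₁ = n−1, dim H₂ = 2. Then {P,Q}^⊤ equals the set of all rank-n projections R with im R ⊆ H₃, and this set is nonempty. -/

import Mathlib

/-- `M` is an orthogonal-projection matrix of rank `n`. -/
def IsProjMatOfRank {ι : Type*} [Fintype ι] [DecidableEq ι] {𝕜 : Type*} [RCLike 𝕜]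
    (n : ℕ) (M : Matrix ι ι 𝕜) : Prop :=
  M.IsHermitian ∧ M * M = M ∧ M.rank = n

/-!
`R P = 0` kills the columns of `R` indexed by `H₁` and by the first basis vector of `H₂`; given
that, `R Q = 0` kills the column of the second basis vector, because the corresponding diagonal
entry `1 - d` of `Q` is nonzero. Since `R` is Hermitian its rows there vanish as well, so `R` is
supported on `H₃`. Conversely, a diagonal `0/1` matrix with `n` ones inside `H₃` is a rank-`n`
projection, which exists because `dim H₃ ≥ n`.
-/

open Matrix Finset

namespace Matrix

section Blocks

variable {l m n o R : Type*}

theorem submatrix_inl_mul_fromBlocks [Fintype m] [Fintype n] [NonUnitalNonAssocSemiring R]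
    (M : Matrix l (m ⊕ n) R) (A : Matrix m m R) (B : Matrix m o R) (D : Matrix n o R) :
    (M * fromBlocks A B 0 D).submatrix id Sum.inl = M.submatrix id Sum.inl * A := by
  ext i j
  simp [mul_apply, Fintype.sum_sum_type]

theorem fromBlocks_zero_mul_fromBlocks [Fintype m] [Fintype n] [NonUnitalNonAssocSemiring R]
    (M : Matrix n n R) (A : Matrix m l R) (B : Matrix m o R) (D : Matrix n o R) :
    fromBlocks (0 : Matrix m m R) 0 0 M * fromBlocks A B 0 D = fromBlocks 0 0 0 (M * D) := by
  simp [fromBlocks_multiply]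

theorem fromBlocks_zero_zero_zero_eq_zero_iff [Zero R] {M : Matrix n o R} :
    fromBlocks (0 : Matrix m l R) 0 0 M = 0 ↔ M = 0 := by
  rw [← fromBlocks_zero, fromBlocks_inj]
  simp

theorem IsHermitian.exists_eq_fromBlocks_zero [AddMonoid R] [StarAddMonoid R]
    {M : Matrix (m ⊕ n) (m ⊕ n) R} (hM : M.IsHermitian) (h : M.submatrix id Sum.inl = 0) :
    ∃ M' : Matrix n n R, M'.IsHermitian ∧ M = Matrix.fromBlocks 0 0 0 M' := by
  have h₁₁ : M.toBlocks₁₁ = 0 := by ext i j; exact congr_fun₂ h (.inl i) j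
  have h₂₁ : M.toBlocks₂₁ = 0 := by ext i j; exact congr_fun₂ h (.inr i) j
  rw [← fromBlocks_toBlocks M, isHermitian_fromBlocks_iff] at hM
  refine ⟨M.toBlocks₂₂, hM.2.2.2, ?_⟩
  conv_lhs => rw [← fromBlocks_toBlocks M]
  rw [← hM.2.2.1, h₁₁, h₂₁, conjTranspose_zero]

theorem rank_fromBlocks_zero_zero_zero [Fintype m] [Fintype n] [DecidableEq n] [CommRing R]
    [StrongRankCondition R] (M : Matrix n n R) :
    (fromBlocks (0 : Matrix m m R) 0 0 M).rank = M.rank := by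
  set E : Matrix (m ⊕ n) n R := fromRows 0 1
  have hM : fromBlocks 0 0 0 M = E * M * Eᵀ := by
    ext (i | i) (j | j) <;> simp [E, mul_apply, one_apply]
  have hE : Eᵀ * E = 1 := by
    ext i j; simp [E, mul_apply, one_apply, eq_comm]
  refine le_antisymm ?_ ?_
  · rw [hM]
    exact (rank_mul_le_left _ _).trans (rank_mul_le_right _ _)
  · calc M.rank = (Eᵀ * (E * M * Eᵀ) * E).rank := by
          simp only [← Matrix.mul_assoc, hE, Matrix.one_mul]
          simp only [Matrix.mul_assoc, hE, Matrix.mul_one]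
      _ ≤ (E * M * Eᵀ).rank := (rank_mul_le_left _ _).trans (rank_mul_le_right _ _)
      _ = _ := by rw [hM]

theorem eq_zero_of_mul_eq_zero_of_mul_eq_zero_fin_two [Semiring R] [NoZeroDivisors R]
    {X : Matrix l (Fin 2) R} {a b c e : R} (he : e ≠ 0) (hp : X * !![(1 : R), 0; 0, 0] = 0)
    (hq : X * !![a, b; c, e] = 0) : X = 0 := by
  have hX₀ : ∀ i, X i 0 = 0 := fun i => by
    simpa [mul_apply, Fin.sum_univ_two] using congr_fun₂ hp i 0
  ext i j
  fin_cases j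
  · exact hX₀ i
  · have := congr_fun₂ hq i 1
    simp only [mul_apply, Fin.sum_univ_two, hX₀] at this
    simpa [he] using this

theorem IsHermitian.mul_eq_zero_and_mul_eq_zero_iff [Fintype l] [Fintype m] [DecidableEq l]
    [Semiring R] [StarRing R] [NoZeroDivisors R]
    {M : Matrix (l ⊕ (Fin 2 ⊕ m)) (l ⊕ (Fin 2 ⊕ m)) R}
    (hM : M.IsHermitian) {a b c e : R} (he : e ≠ 0) :
    (M * Matrix.fromBlocks 1 0 0 (Matrix.fromBlocks !![1, 0; 0, 0] 0 0 0) = 0 ∧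
        M * Matrix.fromBlocks 1 0 0 (Matrix.fromBlocks !![a, b; c, e] 0 0 0) = 0) ↔
      ∃ M₃ : Matrix m m R, M = Matrix.fromBlocks 0 0 0 (Matrix.fromBlocks 0 0 0 M₃) := by
  constructor
  · rintro ⟨hP, hQ⟩
    have hM₁ : M.submatrix id Sum.inl = 0 := by
      rw [← Matrix.mul_one (M.submatrix id Sum.inl), ← submatrix_inl_mul_fromBlocks, hP]
      rfl
    obtain ⟨M', hM', rfl⟩ := hM.exists_eq_fromBlocks_zero hM₁
    rw [fromBlocks_zero_mul_fromBlocks, fromBlocks_zero_zero_zero_eq_zero_iff] at hP hQ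
    have hM'₁ : M'.submatrix id Sum.inl = 0 := by
      refine eq_zero_of_mul_eq_zero_of_mul_eq_zero_fin_two (a := a) (b := b) (c := c) he ?_ ?_
      · rw [← submatrix_inl_mul_fromBlocks, hP]; rfl
      · rw [← submatrix_inl_mul_fromBlocks, hQ]; rfl
    obtain ⟨M₃, -, rfl⟩ := hM'.exists_eq_fromBlocks_zero hM'₁
    exact ⟨M₃, rfl⟩
  · rintro ⟨M₃, rfl⟩
    simp [fromBlocks_zero_mul_fromBlocks]

end Blocks

end Matrix

section Projections

variable {ι 𝕜 : Type*} [Fintype ι] [DecidableEq ι] [RCLike 𝕜]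

theorem isProjMatOfRank_diagonal_indicator (s : Finset ι) :
    IsProjMatOfRank #s (diagonal fun i => if i ∈ s then (1 : 𝕜) else 0) := by
  refine ⟨?_, ?_, ?_⟩
  · rw [isHermitian_diagonal_iff]
    intro i
    split_ifs <;> simp
  · rw [diagonal_mul_diagonal]
    congr 1
    funext i
    split_ifs <;> simp
  · rw [rank_diagonal, Fintype.card_subtype]
    congr
    ext i
    simp

theorem exists_isProjMatOfRank {n : ℕ} (h : n ≤ Fintype.card ι) :
    ∃ M : Matrix ι ι 𝕜, IsProjMatOfRank n M := by
  obtain ⟨s, -, rfl⟩ := Finset.exists_subset_card_eq (s := univ) h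
  exact ⟨_, isProjMatOfRank_diagonal_indicator s⟩

theorem IsProjMatOfRank.fromBlocks_zero {κ : Type*} [Fintype κ] [DecidableEq κ] {n : ℕ}
    {M : Matrix ι ι 𝕜} (hM : IsProjMatOfRank n M) :
    IsProjMatOfRank n (fromBlocks (0 : Matrix κ κ 𝕜) 0 0 M) := by
  obtain ⟨hH, hidem, hrank⟩ := hM
  refine ⟨?_, ?_, ?_⟩
  · exact isHermitian_fromBlocks_iff.2 ⟨isHermitian_zero, by simp, by simp, hH⟩
  · rw [fromBlocks_zero_mul_fromBlocks, hidem]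
  · rw [rank_fromBlocks_zero_zero_zero, hrank]

end Projections

theorem stmt14_general {𝕜 : Type*} [RCLike 𝕜] (n m : ℕ) (hm : n ≤ m)
    (d : ℝ) (hd₁ : d < 1)
    (P Q : Matrix (Fin (n - 1) ⊕ (Fin 2 ⊕ Fin m)) (Fin (n - 1) ⊕ (Fin 2 ⊕ Fin m)) 𝕜)
    (hP : P = Matrix.fromBlocks 1 0 0 (Matrix.fromBlocks !![(1 : 𝕜), 0; 0, 0] 0 0 0))
    (hQ : Q = Matrix.fromBlocks 1 0 0
      (Matrix.fromBlocks
        !![((d : ℝ) : 𝕜), ((Real.sqrt (d * (1 - d)) : ℝ) : 𝕜);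
           ((Real.sqrt (d * (1 - d)) : ℝ) : 𝕜), ((1 - d : ℝ) : 𝕜)] 0 0 0)) :
    {R | IsProjMatOfRank n R ∧ R * P = 0 ∧ R * Q = 0} =
        {R | IsProjMatOfRank n R ∧
          ∃ R₃ : Matrix (Fin m) (Fin m) 𝕜,
            R = Matrix.fromBlocks 0 0 0 (Matrix.fromBlocks 0 0 0 R₃)} ∧
      {R | IsProjMatOfRank n R ∧ R * P = 0 ∧ R * Q = 0}.Nonempty := by
  have h₁ : ((1 - d : ℝ) : 𝕜) ≠ 0 := RCLike.ofReal_ne_zero.2 (sub_ne_zero.2 hd₁.ne')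
  have hperp : {R | IsProjMatOfRank n R ∧ R * P = 0 ∧ R * Q = 0} =
      {R | IsProjMatOfRank n R ∧ ∃ R₃ : Matrix (Fin m) (Fin m) 𝕜,
        R = Matrix.fromBlocks 0 0 0 (Matrix.fromBlocks 0 0 0 R₃)} :=
    Set.ext fun R => and_congr_right fun hR =>
      hP ▸ hQ ▸ hR.1.mul_eq_zero_and_mul_eq_zero_iff h₁
  refine ⟨hperp, ?_⟩
  obtain ⟨R₃, hR₃⟩ :=
    exists_isProjMatOfRank (𝕜 := 𝕜) (by simpa using hm : n ≤ Fintype.card (Fin m))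
  exact hperp ▸ ⟨_, hR₃.fromBlocks_zero.fromBlocks_zero, R₃, rfl⟩

/-- Let `P = diag(I_{n−1}, [[1,0],[0,0]], 0)` and
`Q = diag(I_{n−1}, [[d,√(d(1−d))],[√(d(1−d)),1−d]], 0)` with `0 ≤ d < 1`, relative to
`H = H₁ ⊕ H₂ ⊕ H₃` with `dim H₁ = n − 1`, `dim H₂ = 2`, `dim H₃ = m ≥ n` (so `dim H ≥ 2n+1`).
Then `{P,Q}^⊤` (the set of rank-`n` projections `R` with `R P = 0` and `R Q = 0`) is exactly
the set of rank-`n` projections with range inside `H₃`, and it is nonempty. -/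
theorem stmt14 {𝕜 : Type*} [RCLike 𝕜] (n m : ℕ) (hn : 2 ≤ n) (hm : n ≤ m)
    (d : ℝ) (hd₀ : 0 ≤ d) (hd₁ : d < 1)
    (P Q : Matrix (Fin (n - 1) ⊕ (Fin 2 ⊕ Fin m)) (Fin (n - 1) ⊕ (Fin 2 ⊕ Fin m)) 𝕜)
    (hP : P = Matrix.fromBlocks 1 0 0 (Matrix.fromBlocks !![(1 : 𝕜), 0; 0, 0] 0 0 0))
    (hQ : Q = Matrix.fromBlocks 1 0 0
      (Matrix.fromBlocks
        !![((d : ℝ) : 𝕜), ((Real.sqrt (d * (1 - d)) : ℝ) : 𝕜);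
           ((Real.sqrt (d * (1 - d)) : ℝ) : 𝕜), ((1 - d : ℝ) : 𝕜)] 0 0 0)) :
    {R | IsProjMatOfRank n R ∧ R * P = 0 ∧ R * Q = 0} =
        {R | IsProjMatOfRank n R ∧
          ∃ R₃ : Matrix (Fin m) (Fin m) 𝕜,
            R = Matrix.fromBlocks 0 0 0 (Matrix.fromBlocks 0 0 0 R₃)} ∧
      {R | IsProjMatOfRank n R ∧ R * P = 0 ∧ R * Q = 0}.Nonempty :=
  stmt14_general n m hm d hd₁ P Q hP hQ
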